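/- Let f ∈ σ(N₁,N₂,N₃) with coefficients q(k,ℓ,m) and let p ∈ ℝ[x,y,z] be the polynomial with p(x,y,z) = ∑ q(k,ℓ,m)·(x+i)^{N₁+k}(x−i)^{N₁−k}(y+i)^{N₂+ℓ}(y−i)^{N₂−ℓ}(z+i)^{N₃+m}(z−i)^{N₃−m} for all real x,y,z (the Calderon transform of f). Then f ∈ Q(N₁,N₂,N₃) if and only if p ∈ Q_P(2N₁,2N₂,2N₃). -/

import Mathlib

open Complex ComplexOrder MvPolynomial

noncomputable section

/-- The lattice box `S(N₁,N₂,N₃)`. -/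
def Sbox (N₁ N₂ N₃ : ℕ) : Finset (ℤ × ℤ × ℤ) :=
  Finset.Icc (0, 0, 0) ((N₁ : ℤ), (N₂ : ℤ), (N₃ : ℤ))

/-- The lattice box `Δ(N₁,N₂,N₃)`. -/
def Dbox (N₁ N₂ N₃ : ℕ) : Finset (ℤ × ℤ × ℤ) :=
  Finset.Icc (-(N₁ : ℤ), -(N₂ : ℤ), -(N₃ : ℤ)) ((N₁ : ℤ), (N₂ : ℤ), (N₃ : ℤ))

/-- The character `exp(i(kα + ℓβ + mγ))`. -/
def eChar (δ : ℤ × ℤ × ℤ) (v : ℝ × ℝ × ℝ) : ℂ :=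
  Complex.exp (Complex.I *
    ((δ.1 : ℂ) * (v.1 : ℂ) + (δ.2.1 : ℂ) * (v.2.1 : ℂ) + (δ.2.2 : ℂ) * (v.2.2 : ℂ)))

/-- `σ(N₁,N₂,N₃)`: trig polynomials with frequencies in `Δ(N₁,N₂,N₃)` taking only real
nonnegative values. -/
def sigmaSet (N₁ N₂ N₃ : ℕ) : Set ((ℝ × ℝ × ℝ) → ℂ) :=
  { f | (∃ q : ℤ × ℤ × ℤ → ℂ, f = fun v => ∑ δ ∈ Dbox N₁ N₂ N₃, q δ * eChar δ v) ∧
        ∀ v, 0 ≤ f v }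

/-- `Q(N₁,N₂,N₃)`: finite sums of squared moduli of trig polynomials with frequencies in `S`. -/
def QSet (N₁ N₂ N₃ : ℕ) : Set ((ℝ × ℝ × ℝ) → ℂ) :=
  { f | ∃ (r : ℕ) (q : Fin r → (ℤ × ℤ × ℤ) → ℂ),
      f = fun v => ∑ j, (‖∑ p ∈ Sbox N₁ N₂ N₃, q j p * eChar p v‖ : ℂ) ^ 2 }

/-- `Q_P(2N₁,2N₂,2N₃)`: real polynomials expressible as finite sums `∑ gⱼ²` with each `gⱼ` of
degree at most `Nᵢ` in the `i`-th variable. -/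
def QPSet (N₁ N₂ N₃ : ℕ) : Set (MvPolynomial (Fin 3) ℝ) :=
  { p | ∃ (r : ℕ) (g : Fin r → MvPolynomial (Fin 3) ℝ),
      (∀ j, (g j).degreeOf 0 ≤ N₁ ∧ (g j).degreeOf 1 ≤ N₂ ∧ (g j).degreeOf 2 ≤ N₃) ∧
      p = ∑ j, (g j) ^ 2 }

/-- The summand `(x+i)^{N₁+k}(x−i)^{N₁−k}(y+i)^{N₂+ℓ}(y−i)^{N₂−ℓ}(z+i)^{N₃+m}(z−i)^{N₃−m}` of
the Calderon transform. -/
def calderonTerm (N₁ N₂ N₃ : ℕ) (δ : ℤ × ℤ × ℤ) (x y z : ℝ) : ℂ :=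
  ((x : ℂ) + Complex.I) ^ (((N₁ : ℤ) + δ.1).toNat) * ((x : ℂ) - Complex.I) ^ (((N₁ : ℤ) - δ.1).toNat) *
  ((y : ℂ) + Complex.I) ^ (((N₂ : ℤ) + δ.2.1).toNat) * ((y : ℂ) - Complex.I) ^ (((N₂ : ℤ) - δ.2.1).toNat) *
  ((z : ℂ) + Complex.I) ^ (((N₃ : ℤ) + δ.2.2).toNat) * ((z : ℂ) - Complex.I) ^ (((N₃ : ℤ) - δ.2.2).toNat)

/-
The Cayley transform `x ↦ (x + i) / (x - i)` maps `ℝ` onto the unit circle minus `1`, and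
`(x + i)^(N+k) (x - i)^(N-k) = (x² + 1)^N ((x + i) / (x - i))^k`. Hence the Calderon transform
satisfies `p(x) = ∏ⱼ (xⱼ² + 1)^Nⱼ f(α)` whenever `e^{iαⱼ}` is the Cayley transform of `xⱼ`.
A trigonometric polynomial with frequencies in `S(N₁,N₂,N₃)` is a polynomial `P` of multidegree
at most `N` evaluated at `e^{iα}`, and `P ↦ ∏ⱼ (xⱼ - i)^Nⱼ P((x + i) / (x - i))` keeps the
multidegree at most `N`, multiplies `|·|²` by `∏ⱼ (xⱼ² + 1)^Nⱼ`, and has an inverse of the same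
kind. So `f = ∑ |Fⱼ|²` gives `p = ∑ |Gⱼ|² = ∑ (Re Gⱼ)² + (Im Gⱼ)²`; conversely `p = ∑ gⱼ²` gives
`f = ∑ |Hⱼ|²` on the dense set where no `e^{iαⱼ}` equals `1`, hence everywhere by continuity.
-/

namespace MvPolynomial

variable {σ R : Type*}

section RatioSubst

variable [Fintype σ] [CommSemiring R]

/-- The substitution `Xᵢ ↦ aᵢ / bᵢ` into `P` with the denominators `bᵢ ^ Nᵢ` cleared; this reading
(`eval_ratioSubst`) needs `degreeOf i P ≤ N i`, as `N i - m i` truncates. -/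
def ratioSubst (N : σ → ℕ) (a b : σ → MvPolynomial σ R) (P : MvPolynomial σ R) :
    MvPolynomial σ R :=
  ∑ m ∈ P.support, C (coeff m P) * ∏ i, a i ^ m i * b i ^ (N i - m i)

theorem degreeOf_ratioSubst_le [DecidableEq σ] {N : σ → ℕ} {a b : σ → MvPolynomial σ R}
    {P : MvPolynomial σ R} (ha : ∀ i j, degreeOf j (a i) ≤ if j = i then 1 else 0)
    (hb : ∀ i j, degreeOf j (b i) ≤ if j = i then 1 else 0) (hP : ∀ i, degreeOf i P ≤ N i)
    (j : σ) : degreeOf j (ratioSubst N a b P) ≤ N j := by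
  refine (degreeOf_sum_le _ _ _).trans (Finset.sup_le fun m hm => ?_)
  have hfactor : ∀ i, degreeOf j (a i ^ m i * b i ^ (N i - m i)) ≤ if j = i then N i else 0 := by
    intro i
    have hmi : m i ≤ N i := degreeOf_le_iff.mp (hP i) m hm
    calc degreeOf j (a i ^ m i * b i ^ (N i - m i))
        ≤ m i * degreeOf j (a i) + (N i - m i) * degreeOf j (b i) :=
          (degreeOf_mul_le _ _ _).trans (add_le_add (degreeOf_pow_le _ _ _) (degreeOf_pow_le _ _ _))
      _ ≤ m i * (if j = i then 1 else 0) + (N i - m i) * (if j = i then 1 else 0) := by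
          gcongr <;> simp only [ha, hb]
      _ = if j = i then N i else 0 := by split_ifs <;> omega
  calc degreeOf j (C (coeff m P) * ∏ i, a i ^ m i * b i ^ (N i - m i))
      ≤ 0 + ∑ i, degreeOf j (a i ^ m i * b i ^ (N i - m i)) :=
        (degreeOf_mul_le _ _ _).trans (add_le_add (degreeOf_C _ _).le (degreeOf_prod_le _ _ _))
    _ ≤ ∑ i, if j = i then N i else 0 := by
        rw [zero_add]; exact Finset.sum_le_sum fun i _ => hfactor i
    _ = N j := by simp

end RatioSubst

theorem degreeOf_map_le {S : Type*} [CommSemiring R] [CommSemiring S] (f : R →+* S)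
    (P : MvPolynomial σ R) (i : σ) : degreeOf i (map f P) ≤ degreeOf i P :=
  degreeOf_le_iff.mpr fun _ hm => monomial_le_degreeOf i (support_map_subset _ _ hm)

theorem degreeOf_X_add_C_le [CommSemiring R] [Nontrivial R] [DecidableEq σ] (i j : σ) (c : R) :
    degreeOf j (X i + C c) ≤ if j = i then 1 else 0 := by
  simpa [degreeOf_X, degreeOf_C] using degreeOf_add_le j (X i) (C c)

theorem degreeOf_X_sub_C_le [CommRing R] [Nontrivial R] [DecidableEq σ] (i j : σ) (c : R) :
    degreeOf j (X i - C c) ≤ if j = i then 1 else 0 := by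
  simpa [degreeOf_X, degreeOf_C] using degreeOf_sub_le j (X i) (C c)

theorem eval_ratioSubst [Fintype σ] {K : Type*} [Field K] {N : σ → ℕ} {a b : σ → MvPolynomial σ K}
    {P : MvPolynomial σ K} (hP : ∀ i, degreeOf i P ≤ N i) (x : σ → K)
    (hb : ∀ i, eval x (b i) ≠ 0) :
    eval x (ratioSubst N a b P) =
      (∏ i, eval x (b i) ^ N i) * eval (fun i => eval x (a i) / eval x (b i)) P := by
  rw [ratioSubst, map_sum, eval_eq', Finset.mul_sum]
  refine Finset.sum_congr rfl fun m hm => ?_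
  have hfactor : ∀ i, eval x (a i) ^ m i * eval x (b i) ^ (N i - m i) =
      eval x (b i) ^ N i * (eval x (a i) / eval x (b i)) ^ m i := by
    intro i
    have hbi := hb i
    rw [div_pow, ← pow_sub_mul_pow _ (degreeOf_le_iff.mp (hP i) m hm)]
    field_simp
  simp only [eval_mul, eval_C, eval_prod, eval_pow]
  rw [Finset.prod_congr rfl fun i _ => hfactor i, Finset.prod_mul_distrib]
  ring

section ComplexParts

def rePart (P : MvPolynomial σ ℂ) : MvPolynomial σ ℝ := AddMonoidAlgebra.map reAddGroupHom P

def imPart (P : MvPolynomial σ ℂ) : MvPolynomial σ ℝ := AddMonoidAlgebra.map imAddGroupHom P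

theorem map_rePart_add_map_imPart_mul_I (P : MvPolynomial σ ℂ) :
    map ofRealHom (rePart P) + C I * map ofRealHom (imPart P) = P := by
  ext m
  simp [coeff_map, rePart, imPart, coeff_C_mul, mul_comm I, Complex.re_add_im]

theorem degreeOf_rePart_le (P : MvPolynomial σ ℂ) (i : σ) : degreeOf i (rePart P) ≤ degreeOf i P :=
  degreeOf_le_iff.mpr fun m hm => monomial_le_degreeOf i (by
    rw [mem_support_iff] at hm ⊢; exact fun h => hm (by simp [rePart, h]))

theorem degreeOf_imPart_le (P : MvPolynomial σ ℂ) (i : σ) : degreeOf i (imPart P) ≤ degreeOf i P :=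
  degreeOf_le_iff.mpr fun m hm => monomial_le_degreeOf i (by
    rw [mem_support_iff] at hm ⊢; exact fun h => hm (by simp [imPart, h]))

theorem eval_ofReal_map_ofReal (x : σ → ℝ) (Q : MvPolynomial σ ℝ) :
    eval (fun i => (x i : ℂ)) (map ofRealHom Q) = eval x Q := by
  rw [eval_map]; exact (eval₂_comp ofRealHom x Q).symm

theorem normSq_eval_ofReal (P : MvPolynomial σ ℂ) (x : σ → ℝ) :
    normSq (eval (fun i => (x i : ℂ)) P) = eval x (rePart P) ^ 2 + eval x (imPart P) ^ 2 := by
  conv_lhs => rw [← map_rePart_add_map_imPart_mul_I P]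
  rw [eval_add, eval_mul, eval_C, eval_ofReal_map_ofReal, eval_ofReal_map_ofReal, mul_comm,
    normSq_add_mul_I]

end ComplexParts

end MvPolynomial

section Cayley

open ComplexConjugate

def cayley (x : ℝ) : ℂ := (x + I) / (x - I)

theorem ofReal_sub_I_ne_zero (x : ℝ) : (x : ℂ) - I ≠ 0 := by
  intro h
  simpa using congrArg im h

theorem normSq_ofReal_sub_I (x : ℝ) : normSq ((x : ℂ) - I) = x ^ 2 + 1 := by
  simp [normSq_apply, sq]

theorem ofReal_add_I_mul_sub_I (x : ℝ) : ((x : ℂ) + I) * (x - I) = ((x ^ 2 + 1 : ℝ) : ℂ) := by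
  push_cast
  linear_combination -I_mul_I

theorem cayley_mul_sub_I (x : ℝ) : cayley x * (x - I) = x + I :=
  div_mul_cancel₀ _ (ofReal_sub_I_ne_zero x)

theorem cayley_sub_one (x : ℝ) : cayley x - 1 = 2 * I / (x - I) := by
  have := ofReal_sub_I_ne_zero x
  rw [cayley]
  field_simp
  ring

theorem cayley_add_one (x : ℝ) : cayley x + 1 = 2 * x / (x - I) := by
  have := ofReal_sub_I_ne_zero x
  rw [cayley]
  field_simp
  ring

theorem norm_cayley (x : ℝ) : ‖cayley x‖ = 1 := by
  have hnorm : ‖(x : ℂ) + I‖ = ‖(x : ℂ) - I‖ := by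
    simp [norm_def, normSq_apply]
  rw [cayley, norm_div, hnorm, div_self (norm_ne_zero_iff.mpr (ofReal_sub_I_ne_zero x))]

theorem exists_exp_mul_I_eq_cayley (x : ℝ) : ∃ α : ℝ, exp (α * I) = cayley x :=
  ⟨arg (cayley x), by simpa [norm_cayley] using norm_mul_exp_arg_mul_I (cayley x)⟩

theorem exists_cayley_eq {w : ℂ} (hw : ‖w‖ = 1) (hw₁ : w ≠ 1) : ∃ x : ℝ, cayley x = w := by
  have hw₀ : w ≠ 0 := by rintro rfl; simp at hw
  have hsub : w - 1 ≠ 0 := sub_ne_zero.mpr hw₁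
  have hconj : conj w = w⁻¹ := (inv_eq_conj hw).symm
  -- `x = i (w + 1) / (w - 1)` inverts `cayley`, and it is real because `conj w = w⁻¹`.
  obtain ⟨x, hx⟩ : ∃ x : ℝ, (x : ℂ) = I * (w + 1) / (w - 1) := by
    refine conj_eq_iff_real.mp ?_ |>.imp fun x hx => hx.symm
    have hsub' : w⁻¹ - 1 ≠ 0 := by rw [sub_ne_zero, inv_ne_one]; exact hw₁
    rw [map_div₀, map_mul, map_add, map_sub, conj_I, map_one, hconj, div_eq_div_iff hsub' hsub]
    field_simp
    ring
  refine ⟨x, ?_⟩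
  rw [cayley, div_eq_iff (ofReal_sub_I_ne_zero x), hx]
  field_simp
  ring

theorem add_I_pow_mul_sub_I_pow (x : ℝ) {N : ℕ} {k : ℤ} (hk : |k| ≤ N) :
    ((x : ℂ) + I) ^ (N + k).toNat * ((x : ℂ) - I) ^ (N - k).toNat =
      ((x ^ 2 + 1 : ℝ) : ℂ) ^ N * cayley x ^ k := by
  obtain ⟨hk₁, hk₂⟩ := abs_le.mp hk
  have hc : cayley x ≠ 0 := norm_ne_zero_iff.mp (by rw [norm_cayley]; exact one_ne_zero)
  set a := (N + k).toNat
  set b := (N - k).toNat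
  have hab : a + b = 2 * N := by omega
  have hk' : k = (a : ℤ) - N := by omega
  have hsq : ((x ^ 2 + 1 : ℝ) : ℂ) = cayley x * ((x : ℂ) - I) ^ 2 := by
    rw [← ofReal_add_I_mul_sub_I, ← cayley_mul_sub_I]
    ring
  rw [hk', zpow_sub₀ hc, zpow_natCast, zpow_natCast, hsq, ← cayley_mul_sub_I, mul_pow, mul_assoc,
    ← pow_add, hab, mul_pow, ← pow_mul, mul_comm 2 N]
  field_simp

end Cayley

section CayleySubst

variable {σ : Type*} [Fintype σ] (N : σ → ℕ)

/-- At real `x`, `cayleySubst N P` takes the value `∏ᵢ (xᵢ - i) ^ Nᵢ * P (cayley x)`. Conversely, at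
`w = cayley x` one has `(w + 1) / 2 = x / (x - i)` and `(w - 1) / (2i) = 1 / (x - i)`, so
`invCayleySubst N g` takes the value `g x / ∏ᵢ (xᵢ - i) ^ Nᵢ`. -/
def cayleySubst (P : MvPolynomial σ ℂ) : MvPolynomial σ ℂ :=
  ratioSubst N (fun i => X i + C I) (fun i => X i - C I) P

def invCayleySubst (g : MvPolynomial σ ℝ) : MvPolynomial σ ℂ :=
  ratioSubst N (fun i => C 2⁻¹ * (X i + C 1)) (fun i => C (2 * I)⁻¹ * (X i - C 1)) (map ofRealHom g)

variable {N}

theorem degreeOf_cayleySubst_le {P : MvPolynomial σ ℂ}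
    (hP : ∀ i, degreeOf i P ≤ N i) (j : σ) : degreeOf j (cayleySubst N P) ≤ N j := by
  classical
  exact degreeOf_ratioSubst_le (fun i j => degreeOf_X_add_C_le i j I)
    (fun i j => degreeOf_X_sub_C_le i j I) hP j

theorem degreeOf_invCayleySubst_le {g : MvPolynomial σ ℝ}
    (hg : ∀ i, degreeOf i g ≤ N i) (j : σ) : degreeOf j (invCayleySubst N g) ≤ N j := by
  classical
  exact degreeOf_ratioSubst_le
    (fun i j => (degreeOf_C_mul_le _ j _).trans (degreeOf_X_add_C_le i j 1))
    (fun i j => (degreeOf_C_mul_le _ j _).trans (degreeOf_X_sub_C_le i j 1))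
    (fun i => (degreeOf_map_le _ g i).trans (hg i)) j

theorem normSq_eval_cayleySubst {P : MvPolynomial σ ℂ} (hP : ∀ i, degreeOf i P ≤ N i)
    (x : σ → ℝ) :
    normSq (eval (fun i => (x i : ℂ)) (cayleySubst N P)) =
      (∏ i, (x i ^ 2 + 1) ^ N i) * normSq (eval (fun i => cayley (x i)) P) := by
  rw [cayleySubst, eval_ratioSubst hP _ (by simpa using fun i => ofReal_sub_I_ne_zero (x i))]
  simp only [eval_add, eval_sub, eval_X, eval_C, map_mul, map_prod, map_pow, normSq_ofReal_sub_I]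
  rfl

theorem mul_normSq_eval_invCayleySubst {g : MvPolynomial σ ℝ} (hg : ∀ i, degreeOf i g ≤ N i)
    (x : σ → ℝ) :
    (∏ i, (x i ^ 2 + 1) ^ N i) * normSq (eval (fun i => cayley (x i)) (invCayleySubst N g)) =
      eval x g ^ 2 := by
  have hb : ∀ i, eval (fun i => cayley (x i)) (C (2 * I)⁻¹ * (X i - C 1)) = ((x i : ℂ) - I)⁻¹ :=
    fun i => by
      simp only [eval_mul, eval_sub, eval_X, eval_C, cayley_sub_one]
      field_simp
  have ha : ∀ i, eval (fun i => cayley (x i)) (C 2⁻¹ * (X i + C 1)) / ((x i : ℂ) - I)⁻¹ = x i :=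
    fun i => by
      have := ofReal_sub_I_ne_zero (x i)
      simp only [eval_mul, eval_add, eval_X, eval_C, cayley_add_one]
      field_simp
  rw [invCayleySubst, eval_ratioSubst (fun i => (degreeOf_map_le _ g i).trans (hg i)) _
    (fun i => by rw [hb]; exact inv_ne_zero (ofReal_sub_I_ne_zero (x i)))]
  simp only [hb, ha]
  rw [eval_ofReal_map_ofReal, map_mul, map_prod, normSq_ofReal, ← mul_assoc,
    ← Finset.prod_mul_distrib]
  have hpos : ∀ i, x i ^ 2 + 1 ≠ 0 := fun i => by positivity
  simp only [map_pow, map_inv₀, normSq_ofReal_sub_I, ← mul_pow, mul_inv_cancel₀ (hpos _), one_pow,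
    Finset.prod_const_one, one_mul]
  ring

end CayleySubst

section Torus

def torusPoint (v : ℝ × ℝ × ℝ) : Fin 3 → ℂ := ![exp (v.1 * I), exp (v.2.1 * I), exp (v.2.2 * I)]

theorem norm_torusPoint (v : ℝ × ℝ × ℝ) (i : Fin 3) : ‖torusPoint v i‖ = 1 := by
  fin_cases i <;> simp [torusPoint, norm_exp_ofReal_mul_I]

theorem continuous_torusPoint : Continuous torusPoint :=
  continuous_pi fun i => by fin_cases i <;> simp only [torusPoint] <;> fun_prop

theorem eChar_eq_mul_zpow (δ : ℤ × ℤ × ℤ) (v : ℝ × ℝ × ℝ) :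
    eChar δ v = exp (v.1 * I) ^ δ.1 * exp (v.2.1 * I) ^ δ.2.1 * exp (v.2.2 * I) ^ δ.2.2 := by
  rw [eChar, ← exp_int_mul, ← exp_int_mul, ← exp_int_mul, ← exp_add, ← exp_add]
  ring_nf

theorem continuous_eChar (δ : ℤ × ℤ × ℤ) : Continuous (eChar δ) := by
  unfold eChar
  fun_prop

theorem dense_setOf_torusPoint_ne_one : Dense {v | ∀ i, torusPoint v i ≠ 1} := by
  have hcircle : Dense {α : ℝ | exp (α * I) ≠ 1} := by
    refine ((Set.countable_range fun n : ℤ => 2 * Real.pi * n).dense_compl ℝ).mono ?_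
    intro α hα h
    obtain ⟨n, hn⟩ := exp_eq_one_iff.mp h
    refine hα ⟨n, ?_⟩
    have hα' : α = n * (2 * Real.pi) := by simpa using congrArg im hn
    linarith
  convert hcircle.prod (hcircle.prod hcircle) using 1
  ext v
  simp [Fin.forall_fin_succ, torusPoint]

theorem exists_torusPoint_eq_cayley (x : Fin 3 → ℝ) :
    ∃ v, torusPoint v = fun i => cayley (x i) := by
  choose α hα using fun i => exists_exp_mul_I_eq_cayley (x i)
  exact ⟨(α 0, α 1, α 2), funext fun i => by fin_cases i <;> simp [torusPoint, hα]⟩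

theorem exists_cayley_eq_torusPoint {v : ℝ × ℝ × ℝ} (hv : ∀ i, torusPoint v i ≠ 1) :
    ∃ x : Fin 3 → ℝ, torusPoint v = fun i => cayley (x i) := by
  choose x hx using fun i => exists_cayley_eq (norm_torusPoint v i) (hv i)
  exact ⟨x, funext fun i => (hx i).symm⟩

end Torus

section Box

variable {N₁ N₂ N₃ : ℕ}

theorem mem_Sbox {δ : ℤ × ℤ × ℤ} : δ ∈ Sbox N₁ N₂ N₃ ↔
    (0 ≤ δ.1 ∧ δ.1 ≤ N₁) ∧ (0 ≤ δ.2.1 ∧ δ.2.1 ≤ N₂) ∧ (0 ≤ δ.2.2 ∧ δ.2.2 ≤ N₃) := by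
  simp only [Sbox, Finset.mem_Icc, Prod.le_def]
  tauto

theorem mem_Dbox {δ : ℤ × ℤ × ℤ} : δ ∈ Dbox N₁ N₂ N₃ ↔
    |δ.1| ≤ N₁ ∧ |δ.2.1| ≤ N₂ ∧ |δ.2.2| ≤ N₃ := by
  simp only [Dbox, Finset.mem_Icc, Prod.le_def, abs_le]
  tauto

def toMono (δ : ℤ × ℤ × ℤ) : Fin 3 →₀ ℕ :=
  Finsupp.equivFunOnFinite.symm ![δ.1.toNat, δ.2.1.toNat, δ.2.2.toNat]

def ofMono (m : Fin 3 →₀ ℕ) : ℤ × ℤ × ℤ := (m 0, m 1, m 2)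

theorem toMono_ofMono (m : Fin 3 →₀ ℕ) : toMono (ofMono m) = m := by
  ext i
  fin_cases i <;> simp [toMono, ofMono]

theorem ofMono_toMono {δ : ℤ × ℤ × ℤ} (hδ : δ ∈ Sbox N₁ N₂ N₃) : ofMono (toMono δ) = δ := by
  obtain ⟨⟨h₁, -⟩, ⟨h₂, -⟩, ⟨h₃, -⟩⟩ := mem_Sbox.mp hδ
  simp [toMono, ofMono, h₁, h₂, h₃]

theorem ofMono_mem_Sbox {m : Fin 3 →₀ ℕ} :
    ofMono m ∈ Sbox N₁ N₂ N₃ ↔ ∀ i, m i ≤ ![N₁, N₂, N₃] i := by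
  simp [mem_Sbox, ofMono, Fin.forall_fin_succ]

theorem toMono_le_of_mem_Sbox {δ : ℤ × ℤ × ℤ} (hδ : δ ∈ Sbox N₁ N₂ N₃) (i : Fin 3) :
    toMono δ i ≤ ![N₁, N₂, N₃] i := by
  rw [← ofMono_toMono hδ] at hδ
  exact ofMono_mem_Sbox.mp hδ i

theorem eChar_eq_prod_pow_toMono {δ : ℤ × ℤ × ℤ} (hδ : δ ∈ Sbox N₁ N₂ N₃) (v : ℝ × ℝ × ℝ) :
    eChar δ v = ∏ i, torusPoint v i ^ toMono δ i := by
  obtain ⟨⟨h₁, -⟩, ⟨h₂, -⟩, ⟨h₃, -⟩⟩ := mem_Sbox.mp hδ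
  rw [eChar_eq_mul_zpow, Fin.prod_univ_three]
  simp [toMono, torusPoint, ← zpow_natCast, h₁, h₂, h₃]

def boxPoly (N₁ N₂ N₃ : ℕ) (c : ℤ × ℤ × ℤ → ℂ) : MvPolynomial (Fin 3) ℂ :=
  ∑ δ ∈ Sbox N₁ N₂ N₃, monomial (toMono δ) (c δ)

theorem eval_torusPoint_boxPoly (c : ℤ × ℤ × ℤ → ℂ) (v : ℝ × ℝ × ℝ) :
    eval (torusPoint v) (boxPoly N₁ N₂ N₃ c) = ∑ δ ∈ Sbox N₁ N₂ N₃, c δ * eChar δ v := by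
  rw [boxPoly, map_sum]
  refine Finset.sum_congr rfl fun δ hδ => ?_
  rw [eval_monomial, eChar_eq_prod_pow_toMono hδ, Finsupp.prod_fintype _ _ (by simp)]

theorem degreeOf_boxPoly_le (c : ℤ × ℤ × ℤ → ℂ) (i : Fin 3) :
    degreeOf i (boxPoly N₁ N₂ N₃ c) ≤ ![N₁, N₂, N₃] i :=
  (degreeOf_sum_le _ _ _).trans <| Finset.sup_le fun δ hδ => degreeOf_le_iff.mpr fun m hm => by
    rw [Finset.mem_singleton.mp (support_monomial_subset hm)]
    exact toMono_le_of_mem_Sbox hδ i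

theorem boxPoly_coeff_toMono {H : MvPolynomial (Fin 3) ℂ}
    (hH : ∀ i, degreeOf i H ≤ ![N₁, N₂, N₃] i) :
    boxPoly N₁ N₂ N₃ (fun δ => coeff (toMono δ) H) = H := by
  ext m
  have hinj : Set.InjOn toMono (Sbox N₁ N₂ N₃) := fun δ hδ δ' hδ' h => by
    rw [← ofMono_toMono hδ, ← ofMono_toMono hδ', h]
  simp only [boxPoly, coeff_sum, coeff_monomial]
  rw [← Finset.sum_image (f := fun m' => if m' = m then coeff m' H else 0) hinj,
    Finset.sum_ite_eq']
  refine ite_eq_left_iff.mpr fun hm => (notMem_support_iff.mp fun hsupp => hm ?_).symm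
  exact Finset.mem_image.mpr ⟨ofMono m,
    ofMono_mem_Sbox.mpr fun i => degreeOf_le_iff.mp (hH i) m hsupp, toMono_ofMono m⟩

theorem sum_Sbox_coeff_toMono_mul_eChar {H : MvPolynomial (Fin 3) ℂ}
    (hH : ∀ i, degreeOf i H ≤ ![N₁, N₂, N₃] i) (v : ℝ × ℝ × ℝ) :
    ∑ δ ∈ Sbox N₁ N₂ N₃, coeff (toMono δ) H * eChar δ v = eval (torusPoint v) H := by
  conv_rhs => rw [← boxPoly_coeff_toMono hH]
  rw [eval_torusPoint_boxPoly]

end Box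

section CalderonTransform

variable {N₁ N₂ N₃ : ℕ}

theorem calderonTerm_eq_mul_cayley_zpow {δ : ℤ × ℤ × ℤ} (hδ : δ ∈ Dbox N₁ N₂ N₃) (x y z : ℝ) :
    calderonTerm N₁ N₂ N₃ δ x y z =
      ((x ^ 2 + 1 : ℝ) : ℂ) ^ N₁ * cayley x ^ δ.1 *
        (((y ^ 2 + 1 : ℝ) : ℂ) ^ N₂ * cayley y ^ δ.2.1) *
        (((z ^ 2 + 1 : ℝ) : ℂ) ^ N₃ * cayley z ^ δ.2.2) := by
  obtain ⟨h₁, h₂, h₃⟩ := mem_Dbox.mp hδ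
  rw [calderonTerm, ← add_I_pow_mul_sub_I_pow x h₁, ← add_I_pow_mul_sub_I_pow y h₂,
    ← add_I_pow_mul_sub_I_pow z h₃]
  ring

def IsCalderonPair (N₁ N₂ N₃ : ℕ) (f : ℝ × ℝ × ℝ → ℂ) (p : MvPolynomial (Fin 3) ℝ) : Prop :=
  ∀ (x : Fin 3 → ℝ) (v : ℝ × ℝ × ℝ), (torusPoint v = fun i => cayley (x i)) →
    ((eval x p : ℝ) : ℂ) = ((∏ i, (x i ^ 2 + 1) ^ ![N₁, N₂, N₃] i : ℝ) : ℂ) * f v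

theorem isCalderonPair_of_sum_calderonTerm {q : ℤ × ℤ × ℤ → ℂ} {f : ℝ × ℝ × ℝ → ℂ}
    (hf : f = fun v => ∑ δ ∈ Dbox N₁ N₂ N₃, q δ * eChar δ v) {p : MvPolynomial (Fin 3) ℝ}
    (hp : ∀ x y z : ℝ,
      ((eval ![x, y, z] p : ℝ) : ℂ) = ∑ δ ∈ Dbox N₁ N₂ N₃, q δ * calderonTerm N₁ N₂ N₃ δ x y z) :
    IsCalderonPair N₁ N₂ N₃ f p := by
  intro x v hv
  have hx : x = ![x 0, x 1, x 2] := by ext i; fin_cases i <;> rfl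
  have h₀ : exp (v.1 * I) = cayley (x 0) := congrFun hv 0
  have h₁ : exp (v.2.1 * I) = cayley (x 1) := congrFun hv 1
  have h₂ : exp (v.2.2 * I) = cayley (x 2) := congrFun hv 2
  conv_lhs => rw [hx, hp]
  rw [hf, Finset.mul_sum]
  refine Finset.sum_congr rfl fun δ hδ => ?_
  rw [calderonTerm_eq_mul_cayley_zpow hδ, eChar_eq_mul_zpow, h₀, h₁, h₂, Fin.prod_univ_three]
  push_cast
  ring

end CalderonTransform

section Directions

variable {N₁ N₂ N₃ : ℕ} {f : ℝ × ℝ × ℝ → ℂ} {p : MvPolynomial (Fin 3) ℝ}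

theorem mem_QPSet_of_mem_QSet (hfp : IsCalderonPair N₁ N₂ N₃ f p) (hf : f ∈ QSet N₁ N₂ N₃) :
    p ∈ QPSet N₁ N₂ N₃ := by
  obtain ⟨r, c, rfl⟩ := hf
  set G : Fin r → MvPolynomial (Fin 3) ℂ :=
    fun j => cayleySubst ![N₁, N₂, N₃] (boxPoly N₁ N₂ N₃ (c j))
  have hG : ∀ j i, degreeOf i (G j) ≤ ![N₁, N₂, N₃] i :=
    fun j => degreeOf_cayleySubst_le (degreeOf_boxPoly_le (c j))
  have hg : ∀ j i, degreeOf i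
      (Fin.append (fun j => rePart (G j)) (fun j => imPart (G j)) j) ≤ ![N₁, N₂, N₃] i := by
    refine Fin.addCases (fun j i => ?_) (fun j i => ?_)
    · rw [Fin.append_left]; exact (degreeOf_rePart_le _ i).trans (hG j i)
    · rw [Fin.append_right]; exact (degreeOf_imPart_le _ i).trans (hG j i)
  refine ⟨r + r, _, fun j => ⟨hg j 0, hg j 1, hg j 2⟩, MvPolynomial.funext fun x => ?_⟩
  obtain ⟨v, hv⟩ := exists_torusPoint_eq_cayley x
  have hsq : ∀ j, eval x (rePart (G j)) ^ 2 + eval x (imPart (G j)) ^ 2 =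
      (∏ i, (x i ^ 2 + 1) ^ ![N₁, N₂, N₃] i) * ‖∑ δ ∈ Sbox N₁ N₂ N₃, c j δ * eChar δ v‖ ^ 2 :=
    fun j => by
      rw [← normSq_eval_ofReal, normSq_eval_cayleySubst (degreeOf_boxPoly_le _), ← hv,
        eval_torusPoint_boxPoly, normSq_eq_norm_sq]
  apply ofReal_injective
  rw [hfp x v hv, map_sum, ofReal_sum, Fin.sum_univ_add, ← Finset.sum_add_distrib, Finset.mul_sum]
  refine Finset.sum_congr rfl fun j _ => ?_
  rw [Fin.append_left, Fin.append_right, eval_pow, eval_pow, ← ofReal_add, hsq]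
  push_cast
  rfl

theorem mem_QSet_of_mem_QPSet (hcont : Continuous f) (hfp : IsCalderonPair N₁ N₂ N₃ f p)
    (hp : p ∈ QPSet N₁ N₂ N₃) : f ∈ QSet N₁ N₂ N₃ := by
  obtain ⟨r, g, hg, rfl⟩ := hp
  have hg' : ∀ j i, degreeOf i (g j) ≤ ![N₁, N₂, N₃] i := fun j i => by
    fin_cases i
    exacts [(hg j).1, (hg j).2.1, (hg j).2.2]
  set H : Fin r → MvPolynomial (Fin 3) ℂ := fun j => invCayleySubst ![N₁, N₂, N₃] (g j)
  refine ⟨r, fun j δ => coeff (toMono δ) (H j), ?_⟩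
  have hH : ∀ j v, ∑ δ ∈ Sbox N₁ N₂ N₃, coeff (toMono δ) (H j) * eChar δ v =
      eval (torusPoint v) (H j) :=
    fun j => sum_Sbox_coeff_toMono_mul_eChar (degreeOf_invCayleySubst_le (hg' j))
  simp only [hH]
  have hcont' : Continuous fun v => ∑ j, (‖eval (torusPoint v) (H j)‖ : ℂ) ^ 2 :=
    continuous_finsetSum _ fun j _ =>
      (continuous_ofReal.comp ((continuous_eval (H j)).comp continuous_torusPoint).norm).pow 2
  refine hcont.ext_on dense_setOf_torusPoint_ne_one hcont' fun v hv => ?_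
  obtain ⟨x, hx⟩ := exists_cayley_eq_torusPoint hv
  have hw : ((∏ i, (x i ^ 2 + 1) ^ ![N₁, N₂, N₃] i : ℝ) : ℂ) ≠ 0 :=
    ofReal_ne_zero.mpr (by positivity)
  apply mul_left_cancel₀ hw
  rw [← hfp x v hx, hx, map_sum, ofReal_sum, Finset.mul_sum]
  refine Finset.sum_congr rfl fun j _ => ?_
  rw [eval_pow, ← mul_normSq_eval_invCayleySubst (hg' j) x, normSq_eq_norm_sq]
  push_cast
  rfl

end Directions

theorem calderon_Q_iff_QP_general (N₁ N₂ N₃ : ℕ) (q : ℤ × ℤ × ℤ → ℂ)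
    (f : ℝ × ℝ × ℝ → ℂ) (hf : f = fun v => ∑ δ ∈ Dbox N₁ N₂ N₃, q δ * eChar δ v)
    (p : MvPolynomial (Fin 3) ℝ)
    (hp : ∀ x y z : ℝ,
      ((eval ![x, y, z] p : ℝ) : ℂ) = ∑ δ ∈ Dbox N₁ N₂ N₃, q δ * calderonTerm N₁ N₂ N₃ δ x y z) :
    f ∈ QSet N₁ N₂ N₃ ↔ p ∈ QPSet N₁ N₂ N₃ := by
  have hfp : IsCalderonPair N₁ N₂ N₃ f p := isCalderonPair_of_sum_calderonTerm hf hp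
  have hcont : Continuous f :=
    hf ▸ continuous_finsetSum _ fun δ _ => continuous_const.mul (continuous_eChar δ)
  exact ⟨mem_QPSet_of_mem_QSet hfp, mem_QSet_of_mem_QPSet hcont hfp⟩

/-- Half of Proposition 5: for `f ∈ σ(N₁,N₂,N₃)` with Calderon transform `p`, one has
`f ∈ Q(N₁,N₂,N₃)` iff `p ∈ Q_P(2N₁,2N₂,2N₃)`. -/
theorem calderon_Q_iff_QP (N₁ N₂ N₃ : ℕ) (q : ℤ × ℤ × ℤ → ℂ)
    (f : ℝ × ℝ × ℝ → ℂ) (hf : f = fun v => ∑ δ ∈ Dbox N₁ N₂ N₃, q δ * eChar δ v)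
    (hσ : f ∈ sigmaSet N₁ N₂ N₃)
    (p : MvPolynomial (Fin 3) ℝ)
    (hp : ∀ x y z : ℝ,
      ((eval ![x, y, z] p : ℝ) : ℂ) = ∑ δ ∈ Dbox N₁ N₂ N₃, q δ * calderonTerm N₁ N₂ N₃ δ x y z) :
    f ∈ QSet N₁ N₂ N₃ ↔ p ∈ QPSet N₁ N₂ N₃ :=
  calderon_Q_iff_QP_general N₁ N₂ N₃ q f hf p hp
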